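/- arXiv:2204.01257 — 3 statements merged into one kernel-verified Lean document; each statement's English description precedes it below -/
import Mathlib

section
/- Let n₁ > 0 and ε ∈ (0,1). Setting n_i = i·n₁ and ε_i = ε^i for i = 1,…,m, and all delays to zero, in the reactive HARQ average AoI formula Δ = -1/2 + (n₁ + ∑_{i=1}^{m-1}(n_{i+1}-n_i)ε_i)/(1-ε_m) + (n₁² + ∑_{i=1}^{m-1}(n_{i+1}²-n_i²)ε_i)/(2(n₁ + ∑_{i=1}^{m-1}(n_{i+1}-n_i)ε_i)), one obtains Δ_TARQ = -1/2 + n₁(2/(1-ε) - 1/2 - m·ε^m/(1-ε^m)). -/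
lemma aux_geom1 (ε : ℝ) (m : ℕ) (hm : 1 ≤ m) :
    (1 + ∑ i ∈ Finset.Icc 1 (m - 1), ε ^ i) * (1 - ε) = 1 - ε ^ m := by
  induction m, hm using Nat.le_induction with
  | base => simp
  | succ n hn ih =>
    have hsplit : ∑ i ∈ Finset.Icc 1 n, ε ^ i
        = ∑ i ∈ Finset.Icc 1 (n - 1), ε ^ i + ε ^ n := by
      conv_lhs => rw [show n = (n - 1) + 1 from (Nat.sub_add_cancel hn).symm]
      rw [Finset.sum_Icc_succ_top (Nat.succ_le_succ (Nat.zero_le _)), Nat.sub_add_cancel hn]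
    rw [show n + 1 - 1 = n from rfl, hsplit]
    linear_combination ih

lemma aux_geom2 (ε : ℝ) (m : ℕ) (hm : 1 ≤ m) :
    (1 + ∑ i ∈ Finset.Icc 1 (m - 1), (2 * (i : ℝ) + 1) * ε ^ i) * (1 - ε) ^ 2
      = 2 * (1 - ε ^ m) - (1 - ε ^ m) * (1 - ε) - 2 * m * ε ^ m * (1 - ε) := by
  induction m, hm using Nat.le_induction with
  | base => simp; ring
  | succ n hn ih =>
    have hsplit : ∑ i ∈ Finset.Icc 1 n, (2 * (i : ℝ) + 1) * ε ^ i
        = ∑ i ∈ Finset.Icc 1 (n - 1), (2 * (i : ℝ) + 1) * ε ^ i + (2 * n + 1) * ε ^ n := by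
      conv_lhs => rw [show n = (n - 1) + 1 from (Nat.sub_add_cancel hn).symm]
      rw [Finset.sum_Icc_succ_top (Nat.succ_le_succ (Nat.zero_le _)), Nat.sub_add_cancel hn]
    rw [show n + 1 - 1 = n from rfl, hsplit]
    push_cast
    linear_combination ih

/-- Specializing the zero-delay unified reactive-HARQ average AoI formula with
`n_i = i·n₁` and `ε_i = ε^i` yields the truncated-ARQ average AoI
`-1/2 + n₁(2/(1-ε) - 1/2 - m·ε^m/(1-ε^m))`. -/
theorem TARQ_special_case (m : ℕ) (hm : 1 ≤ m) (n₁ ε : ℝ) (hn : 0 < n₁)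
    (hε0 : 0 < ε) (hε1 : ε < 1) :
    (-1/2
      + (n₁ + ∑ i ∈ Finset.Icc 1 (m - 1), (((i:ℝ)+1) * n₁ - (i:ℝ) * n₁) * ε ^ i)
          / (1 - ε ^ m)
      + (n₁ ^ 2 + ∑ i ∈ Finset.Icc 1 (m - 1),
            ((((i:ℝ)+1) * n₁) ^ 2 - ((i:ℝ) * n₁) ^ 2) * ε ^ i)
          / (2 * (n₁ + ∑ i ∈ Finset.Icc 1 (m - 1), (((i:ℝ)+1) * n₁ - (i:ℝ) * n₁) * ε ^ i)))
    = -1/2 + n₁ * (2 / (1 - ε) - 1/2 - (m : ℝ) * ε ^ m / (1 - ε ^ m)) := by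
  have hε' : (1 : ℝ) - ε ≠ 0 := by linarith
  have hεm1 : ε ^ m < 1 := pow_lt_one₀ hε0.le hε1 (by omega)
  have hεm : (1 : ℝ) - ε ^ m ≠ 0 := by linarith
  have hS := aux_geom1 ε m hm
  have hT := aux_geom2 ε m hm
  have e1 : ∑ i ∈ Finset.Icc 1 (m - 1), (((i:ℝ)+1) * n₁ - (i:ℝ) * n₁) * ε ^ i
      = n₁ * ∑ i ∈ Finset.Icc 1 (m - 1), ε ^ i := by
    rw [Finset.mul_sum]; exact Finset.sum_congr rfl fun i _ => by ring
  have e2 : ∑ i ∈ Finset.Icc 1 (m - 1), ((((i:ℝ)+1) * n₁) ^ 2 - ((i:ℝ) * n₁) ^ 2) * ε ^ i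
      = n₁ ^ 2 * ∑ i ∈ Finset.Icc 1 (m - 1), (2 * (i : ℝ) + 1) * ε ^ i := by
    rw [Finset.mul_sum]; exact Finset.sum_congr rfl fun i _ => by ring
  set S := ∑ i ∈ Finset.Icc 1 (m - 1), ε ^ i with hSdef
  set T := ∑ i ∈ Finset.Icc 1 (m - 1), (2 * (i : ℝ) + 1) * ε ^ i with hTdef
  have hS' : S = (1 - ε ^ m) / (1 - ε) - 1 := by
    field_simp
    linear_combination hS
  have hT' : T = (2 * (1 - ε ^ m) - (1 - ε ^ m) * (1 - ε) - 2 * m * ε ^ m * (1 - ε)) / (1 - ε) ^ 2 - 1 := by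
    field_simp
    linear_combination hT
  rw [e1, e2, hS', hT']
  have hpos : (0:ℝ) < 1 - ε ^ m := by linarith
  have hd : n₁ + n₁ * ((1 - ε ^ m) / (1 - ε) - 1) = n₁ * (1 - ε ^ m) / (1 - ε) := by
    field_simp
    ring
  rw [hd]
  have h1 : n₁ * (1 - ε ^ m) / (1 - ε) ≠ 0 := by positivity
  field_simp
  ring
end

section
/- Let Δ_Reac^P = -1 - τ_f - (τ_c + n_m + m𝒯)ε_m/(1-ε_m) + 2(τ_c + n₁ + 𝒯 + ∑_{i=1}^{m-1}(n_{i+1}-n_i+𝒯)ε_i)/(1-ε_m) and Δ_Proac^P = -1 - τ_f - (τ_c + n_m + 𝒯)ε_m/(1-ε_m) + 2(τ_c + n₁ + 𝒯 + ∑_{i=1}^{m-1}(n_{i+1}-n_i)ε_i)/(1-ε_m), where 𝒯, τ_c, τ_f ≥ 0, n₁ < ⋯ < n_m, 1 > ε_m ≥ 0, ε_i ∈ [0,1] nonincreasing, m ≥ 1. Then Δ_Reac^P ≥ Δ_Proac^P, with equality if m = 1 or 𝒯 = 0. -/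
open Finset in
/-- Closed-form average Peak AoI of reactive HARQ. -/
noncomputable def PeakAoIReac (m : ℕ) (n ε : ℕ → ℝ) (τc T τf : ℝ) : ℝ :=
  -1 - τf - (τc + n m + (m : ℝ) * T) * ε m / (1 - ε m)
    + 2 * (τc + n 1 + T + ∑ i ∈ Icc 1 (m - 1), (n (i + 1) - n i + T) * ε i) / (1 - ε m)

open Finset in
/-- Closed-form average Peak AoI of proactive HARQ. -/
noncomputable def PeakAoIProac (m : ℕ) (n ε : ℕ → ℝ) (τc T τf : ℝ) : ℝ :=
  -1 - τf - (τc + n m + T) * ε m / (1 - ε m)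
    + 2 * (τc + n 1 + T + ∑ i ∈ Icc 1 (m - 1), (n (i + 1) - n i) * ε i) / (1 - ε m)

open Finset in
lemma peak_diff_eq (m : ℕ) (hm : 1 ≤ m) (n ε : ℕ → ℝ) (τc T τf : ℝ)
    (hεm : ε m < 1) :
    PeakAoIReac m n ε τc T τf - PeakAoIProac m n ε τc T τf
      = T * (2 * (∑ i ∈ Icc 1 (m - 1), ε i) - ((m : ℝ) - 1) * ε m) / (1 - ε m) := by
  have h1 : (1 : ℝ) - ε m ≠ 0 := by linarith
  have hsum : ∑ i ∈ Icc 1 (m - 1), (n (i + 1) - n i + T) * ε i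
      = (∑ i ∈ Icc 1 (m - 1), (n (i + 1) - n i) * ε i) + T * ∑ i ∈ Icc 1 (m - 1), ε i := by
    rw [Finset.mul_sum, ← Finset.sum_add_distrib]
    exact Finset.sum_congr rfl fun i _ => by ring
  unfold PeakAoIReac PeakAoIProac
  rw [hsum]
  field_simp
  ring

open Finset in
lemma eps_ge (m : ℕ) (ε : ℕ → ℝ)
    (hmono : ∀ i ∈ Finset.Icc 1 (m - 1), ε (i + 1) ≤ ε i) :
    ∀ d j, 1 ≤ j → j + d = m → ε m ≤ ε j := by
  intro d
  induction d with
  | zero => intro j hj hjm; simp at hjm; rw [hjm]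
  | succ d ih =>
    intro j hj hjm
    have hmem : j ∈ Finset.Icc 1 (m - 1) := by
      simp only [Finset.mem_Icc]
      omega
    exact le_trans (ih (j + 1) (by omega) (by omega)) (hmono j hmem)

/-- The average Peak AoI of reactive HARQ is never smaller than that of proactive HARQ,
with equality when `m = 1` or `𝒯 = 0`. -/
theorem peak_reactive_ge_proactive (m : ℕ) (hm : 1 ≤ m) (n ε : ℕ → ℝ) (τc T τf : ℝ)
    (hT : 0 ≤ T) (hτc : 0 ≤ τc) (hτf : 0 ≤ τf)
    (hn : ∀ i ∈ Finset.Icc 1 (m - 1), n i < n (i + 1))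
    (hεrange : ∀ i ∈ Finset.Icc 1 m, 0 ≤ ε i ∧ ε i ≤ 1)
    (hmono : ∀ i ∈ Finset.Icc 1 (m - 1), ε (i + 1) ≤ ε i)
    (hεm0 : 0 ≤ ε m) (hεm : ε m < 1) :
    PeakAoIReac m n ε τc T τf ≥ PeakAoIProac m n ε τc T τf ∧
    ((m = 1 ∨ T = 0) → PeakAoIReac m n ε τc T τf = PeakAoIProac m n ε τc T τf) := by
  have hdiff := peak_diff_eq m hm n ε τc T τf hεm
  have hpos : (0 : ℝ) < 1 - ε m := by linarith
  have hsumge : ((m : ℝ) - 1) * ε m ≤ ∑ i ∈ Finset.Icc 1 (m - 1), ε i := by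
    have h := Finset.sum_le_sum (f := fun _ : ℕ => ε m) (g := ε)
      (s := Finset.Icc 1 (m - 1)) (fun i hi => by
        simp only [Finset.mem_Icc] at hi
        exact eps_ge m ε hmono (m - i) i hi.1 (by omega))
    have hcard : (Finset.Icc 1 (m - 1)).card = m - 1 := by
      rw [Nat.card_Icc]; omega
    rw [Finset.sum_const, hcard, nsmul_eq_mul] at h
    have : ((m - 1 : ℕ) : ℝ) = (m : ℝ) - 1 := by
      push_cast [Nat.cast_sub hm]; ring
    rwa [this] at h
  have hsumnn : 0 ≤ ∑ i ∈ Finset.Icc 1 (m - 1), ε i := by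
    apply Finset.sum_nonneg
    intro i hi
    simp only [Finset.mem_Icc] at hi
    exact (hεrange i (by simp only [Finset.mem_Icc]; omega)).1
  have hmεnn : 0 ≤ ((m : ℝ) - 1) * ε m := by
    apply mul_nonneg _ hεm0
    have : (1 : ℝ) ≤ (m : ℝ) := by exact_mod_cast hm
    linarith
  constructor
  · have : 0 ≤ T * (2 * (∑ i ∈ Finset.Icc 1 (m - 1), ε i) - ((m : ℝ) - 1) * ε m) / (1 - ε m) := by
      apply div_nonneg _ (le_of_lt hpos)
      apply mul_nonneg hT
      linarith
    linarith [hdiff]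
  · rintro (rfl | rfl)
    · have : ∑ i ∈ Finset.Icc 1 (1 - 1), ε i = 0 := by simp
      rw [this] at hdiff
      simp at hdiff
      linarith [hdiff]
    · simp at hdiff
      linarith [hdiff]
end

section
/- Let ε_i ∈ [0,1] be nonincreasing with ε_m < 1 and suppose ε_i → 0 as i → ∞ (monotonically). Then the average Peak AoI of proactive HARQ, Δ_Proac^P(m) = -1 - τ_f - (τ_c + n_m + 𝒯)ε_m/(1-ε_m) + 2(τ_c + n₁ + 𝒯 + ∑_{i=1}^{m-1}(n_{i+1}-n_i)ε_i)/(1-ε_m), converges as m → ∞ to -1 - τ_f + 2(τ_c + n₁ + 𝒯 + ∑_{i=1}^{∞}(n_{i+1}-n_i)ε_i), provided the series ∑(n_{i+1}-n_i)ε_i converges and (n_m)ε_m → 0. -/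
open Filter Topology Finset

theorem Filter.Tendsto.add_add_mul_of_tendsto_zero {α : Type*} {l : Filter α} {n ε : α → ℝ}
    (a b : ℝ) (hε : Tendsto ε l (𝓝 0)) (hnε : Tendsto (fun x => n x * ε x) l (𝓝 0)) :
    Tendsto (fun x => (a + n x + b) * ε x) l (𝓝 0) := by
  simpa [add_mul, add_right_comm] using ((hε.const_mul a).add hnε).add (hε.const_mul b)

theorem rateless_peak_aoi_limit_general (n ε : ℕ → ℝ) (τc T τf : ℝ) (S : ℝ)
    (hεlim : Tendsto ε atTop (𝓝 0))
    (hnε : Tendsto (fun m : ℕ => n m * ε m) atTop (𝓝 0))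
    (hS : Tendsto (fun N : ℕ => ∑ i ∈ Icc 1 N, (n (i + 1) - n i) * ε i) atTop (𝓝 S)) :
    Tendsto (fun m : ℕ =>
        -1 - τf - (τc + n m + T) * ε m / (1 - ε m)
          + 2 * (τc + n 1 + T + ∑ i ∈ Icc 1 (m - 1), (n (i + 1) - n i) * ε i) / (1 - ε m))
      atTop (𝓝 (-1 - τf + 2 * (τc + n 1 + T + S))) := by
  have hden : Tendsto (fun m => 1 - ε m) atTop (𝓝 1) := by simpa using hεlim.const_sub 1
  have hloss := hεlim.add_add_mul_of_tendsto_zero τc T hnε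
  have hsum := hS.comp (tendsto_sub_atTop_nat 1)
  simpa using ((hloss.div hden one_ne_zero).const_sub (-1 - τf)).add
    (((hsum.const_add (τc + n 1 + T)).const_mul 2).div hden one_ne_zero)

/-- Rateless-codes limit of the proactive average Peak AoI: as `m → ∞`,
`Δ^P_Proac(m) = -1 - τ_f - (τ_c+n_m+𝒯)ε_m/(1-ε_m)
  + 2(τ_c+n₁+𝒯+∑_{i=1}^{m-1}(n_{i+1}-n_i)ε_i)/(1-ε_m)`
converges to `-1 - τ_f + 2(τ_c + n₁ + 𝒯 + ∑_{i=1}^∞ (n_{i+1}-n_i)ε_i)`. -/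
theorem rateless_peak_aoi_limit (n ε : ℕ → ℝ) (τc T τf : ℝ) (S : ℝ)
    (hτc : 0 ≤ τc) (hT : 0 ≤ T) (hτf : 0 ≤ τf)
    (hn : ∀ i : ℕ, 1 ≤ i → n i < n (i + 1))
    (hεmono : Antitone ε) (hε0 : ∀ i, 0 ≤ ε i) (hε1 : ∀ i, ε i ≤ 1)
    (hεm : ∀ m : ℕ, ε m < 1)
    (hεlim : Tendsto ε atTop (𝓝 0))
    (hnε : Tendsto (fun m : ℕ => n m * ε m) atTop (𝓝 0))
    (hS : Tendsto (fun N : ℕ => ∑ i ∈ Icc 1 N, (n (i + 1) - n i) * ε i) atTop (𝓝 S)) :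
    Tendsto (fun m : ℕ =>
        -1 - τf - (τc + n m + T) * ε m / (1 - ε m)
          + 2 * (τc + n 1 + T + ∑ i ∈ Icc 1 (m - 1), (n (i + 1) - n i) * ε i) / (1 - ε m))
      atTop (𝓝 (-1 - τf + 2 * (τc + n 1 + T + S))) :=
  rateless_peak_aoi_limit_general n ε τc T τf S hεlim hnε hS
end
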